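/- Let k > 0, ω = k², E0 ∈ ℝ, γ > 0, λ ∈ ℝ, J > 0, and μ = λJ². Then the map (B, Z) ↦ |Z/J|² is a bijection from the set of solutions (B, Z) ∈ ℂ² of the harmonic scattering system {(2ik − k²)B + γZ = 2ikJ, γB + (E0 − k²)Z + λ|Z|²Z = 0} onto the set of real numbers R satisfying the response equation R·(μR + γ²/(ω+4) − (ω − E0))² + (4γ⁴/(ω(ω+4)²))·R − 4γ²/(ω+4) = 0. -/

import Mathlib

/-!
Using the first (linear) equation to eliminate `B` leaves one self-consistent equation
`w * effectiveDet (‖w‖²) = -2ikγ` for `w = Z / J`. Taking squared norms turns it into the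
response equation for `R = ‖w‖²`. Conversely, a root `R` forces `effectiveDet R ≠ 0`, so
`w = -2ikγ / effectiveDet R` is the only candidate, and its squared norm is indeed `R`.
-/

/-- The set of harmonic scattering solutions `(B, Z)` of the algebraic system
`(2ik - k²)B + γZ = 2ikJ`, `γB + (E0 - k²)Z + λ|Z|²Z = 0`. -/
def ScatteringSolutions (k E0 γ lam J : ℝ) : Set (ℂ × ℂ) :=
  {bz : ℂ × ℂ |
    (2 * Complex.I * (k : ℂ) - (k : ℂ)^2) * bz.1 + (γ : ℂ) * bz.2 =
      2 * Complex.I * (k : ℂ) * (J : ℂ) ∧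
    (γ : ℂ) * bz.1 + ((E0 : ℂ) - (k : ℂ)^2) * bz.2 +
      (lam : ℂ) * ((‖bz.2‖ : ℂ))^2 * bz.2 = 0}

/-- The set of real solutions of the response equation. -/
def ResponseSolutions (ω E0 γ μ : ℝ) : Set ℝ :=
  {R : ℝ | R * (μ * R + γ^2 / (ω + 4) - (ω - E0))^2 +
      (4 * γ^4 / (ω * (ω + 4)^2)) * R - 4 * γ^2 / (ω + 4) = 0}

theorem Set.bijOn_norm_sq_setOf_mul_eq {𝕜 : Type*} [NormedDivisionRing 𝕜] (D : ℝ → 𝕜)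
    {a : 𝕜} (ha : a ≠ 0) :
    Set.BijOn (fun z : 𝕜 => ‖z‖ ^ 2) {z | z * D (‖z‖ ^ 2) = a} {t | t * ‖D t‖ ^ 2 = ‖a‖ ^ 2} := by
  refine ⟨fun z (hz : _ = a) => ?_,
    fun z (hz : _ = a) z' (hz' : _ = a) (h : ‖z‖ ^ 2 = ‖z'‖ ^ 2) => ?_,
    fun t (ht : t * _ = _) => ?_⟩
  · change ‖z‖ ^ 2 * _ = _
    rw [← hz, norm_mul, mul_pow]
  · rw [← h] at hz'
    exact mul_right_cancel₀ (right_ne_zero_of_mul (hz.trans_ne ha)) (hz.trans hz'.symm)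
  · have hD : D t ≠ 0 := by
      rintro h
      simp [h, eq_comm (a := (0 : ℝ)), ha] at ht
    have hnorm : ‖a * (D t)⁻¹‖ ^ 2 = t := by
      rw [norm_mul, norm_inv, mul_pow, inv_pow, ← ht, mul_inv_cancel_right₀ (by positivity)]
    exact ⟨a * (D t)⁻¹, show _ = a by rw [hnorm, inv_mul_cancel_right₀ hD], hnorm⟩

theorem Set.bijOn_div_snd_setOf_fst_eq {K : Type*} [Field K] {u : K} (hu : u ≠ 0) (f : K → K)
    (Q : K → Prop) :
    Set.BijOn (fun p : K × K => p.2 / u) {p | p.1 = f p.2 ∧ Q (p.2 / u)} {w | Q w} := by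
  refine ⟨fun p hp => hp.2, fun p hp p' hp' h => ?_, fun w hw => ⟨(f (w * u), w * u), ⟨rfl, ?_⟩, ?_⟩⟩
  · have h2 : p.2 = p'.2 := (div_left_inj' hu).mp h
    exact Prod.ext (by rw [hp.1, hp'.1, h2]) h2
  · simpa [hu] using hw
  · simp [hu]

open Complex

/-- The determinant of the linear system obtained by freezing the Kerr term `μ s`. -/
noncomputable def effectiveDet (k E0 γ μ s : ℝ) : ℂ :=
  (2 * I * k - k ^ 2) * ((E0 - k ^ 2 + μ * s : ℝ) : ℂ) - γ ^ 2

theorem two_mul_I_mul_sub_sq_ne_zero {k : ℝ} (hk : k ≠ 0) : 2 * I * k - (k : ℂ) ^ 2 ≠ 0 := by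
  intro h
  have him := congrArg Complex.im h
  simp [← Complex.ofReal_pow, hk] at him

theorem norm_effectiveDet_sq (k E0 γ μ s : ℝ) :
    ‖effectiveDet k E0 γ μ s‖ ^ 2 =
      ((μ * s - (k ^ 2 - E0)) * k ^ 2 + γ ^ 2) ^ 2 + 4 * k ^ 2 * (μ * s - (k ^ 2 - E0)) ^ 2 := by
  have h : effectiveDet k E0 γ μ s =
      ((-((μ * s - (k ^ 2 - E0)) * k ^ 2) - γ ^ 2 : ℝ) : ℂ) +
        ((2 * k * (μ * s - (k ^ 2 - E0)) : ℝ) : ℂ) * I := by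
    simp only [effectiveDet]; push_cast; ring
  rw [← Complex.normSq_eq_norm_sq, h, Complex.normSq_add_mul_I]
  ring

theorem mem_responseSolutions_iff {k : ℝ} (hk : k ≠ 0) (E0 γ μ R : ℝ) :
    R ∈ ResponseSolutions (k ^ 2) E0 γ μ ↔
      R * ‖effectiveDet k E0 γ μ R‖ ^ 2 = ‖-(2 * I * k * γ)‖ ^ 2 := by
  have hk4 : k ^ 2 + 4 ≠ 0 := by positivity
  have hnorm : ‖-(2 * I * k * γ)‖ ^ 2 = 4 * k ^ 2 * γ ^ 2 := by
    simp only [norm_neg, norm_mul, Complex.norm_ofNat, Complex.norm_I, Complex.norm_real,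
      Real.norm_eq_abs, mul_pow, sq_abs]
    ring
  have hcleared : R * (μ * R + γ ^ 2 / (k ^ 2 + 4) - (k ^ 2 - E0)) ^ 2 +
        4 * γ ^ 4 / (k ^ 2 * (k ^ 2 + 4) ^ 2) * R - 4 * γ ^ 2 / (k ^ 2 + 4) =
      (R * (((μ * R - (k ^ 2 - E0)) * k ^ 2 + γ ^ 2) ^ 2 +
        4 * k ^ 2 * (μ * R - (k ^ 2 - E0)) ^ 2) - 4 * k ^ 2 * γ ^ 2) / (k ^ 2 * (k ^ 2 + 4)) := by
    field_simp
    ring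
  change _ = _ ↔ _
  rw [hcleared, div_eq_zero_iff, sub_eq_zero, norm_effectiveDet_sq, hnorm,
    or_iff_left (by positivity)]

theorem mem_scatteringSolutions_iff {k J : ℝ} (hk : k ≠ 0) (hJ : J ≠ 0) (E0 γ lam : ℝ)
    (bz : ℂ × ℂ) :
    bz ∈ ScatteringSolutions k E0 γ lam J ↔
      bz.1 = (2 * I * k * J - γ * bz.2) / (2 * I * k - k ^ 2) ∧
      bz.2 / J * effectiveDet k E0 γ (lam * J ^ 2) (‖bz.2 / J‖ ^ 2) = -(2 * I * k * γ) := by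
  obtain ⟨B, Z⟩ := bz
  have hc := two_mul_I_mul_sub_sq_ne_zero hk
  have hJc : (J : ℂ) ≠ 0 := ofReal_ne_zero.mpr hJ
  have hnorm : ((E0 - k ^ 2 + lam * J ^ 2 * ‖Z / J‖ ^ 2 : ℝ) : ℂ) =
      E0 - k ^ 2 + lam * (‖Z‖ : ℂ) ^ 2 := by
    rw [norm_div, Complex.norm_real, Real.norm_eq_abs, div_pow, sq_abs]
    push_cast
    field_simp
  change (_ ∧ _) ↔ _
  dsimp only
  rw [eq_div_iff hc, effectiveDet, hnorm]
  constructor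
  · rintro ⟨h1, h2⟩
    refine ⟨by linear_combination h1, ?_⟩
    field_simp
    linear_combination (2 * I * k - k ^ 2) * h2 - γ * h1
  · rintro ⟨h1, h2⟩
    refine ⟨by linear_combination h1, ?_⟩
    field_simp at h2
    refine (mul_eq_zero.mp ?_).resolve_left hc
    linear_combination γ * h1 + h2

/-- `(B, Z) ↦ |Z/J|²` is a bijection from the harmonic scattering
solutions onto the real solutions of the response equation. -/
theorem response_map_bijection
    (k ω E0 γ lam J μ : ℝ) (hk : 0 < k) (hω : ω = k^2) (hγ : 0 < γ)
    (hJ : 0 < J) (hμ : μ = lam * J^2) :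
    Set.BijOn (fun bz : ℂ × ℂ => ‖bz.2 / (J : ℂ)‖^2)
      (ScatteringSolutions k E0 γ lam J) (ResponseSolutions ω E0 γ μ) := by
  subst hω hμ
  have hsource := Set.ext (mem_scatteringSolutions_iff hk.ne' hJ.ne' E0 γ lam)
  have htarget := Set.ext (mem_responseSolutions_iff hk.ne' E0 γ (lam * J ^ 2))
  have hforce : -(2 * I * k * γ) ≠ 0 := by simp [hk.ne', hγ.ne']
  rw [hsource, htarget]
  exact (Set.bijOn_norm_sq_setOf_mul_eq _ hforce).comp
    (Set.bijOn_div_snd_setOf_fst_eq (ofReal_ne_zero.mpr hJ.ne')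
      (fun Z => (2 * I * k * J - γ * Z) / (2 * I * k - k ^ 2))
      (fun w => w * effectiveDet k E0 γ (lam * J ^ 2) (‖w‖ ^ 2) = -(2 * I * k * γ)))
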